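/- Let X be a random variable with distribution P, where P = (1/4)·P∘S₁⁻¹ + (3/4)·P∘S₂⁻¹, S₁(x) = x/4, S₂(x) = x/2 + 1/2. Then E(X²) = 28/51. -/

import Mathlib

open MeasureTheory Set
open scoped ENNReal Classical

noncomputable section

/-- The similarity map `S₁(x) = x/4`. -/
def S1 (x : ℝ) : ℝ := x / 4

/-- The similarity map `S₂(x) = x/2 + 1/2`. -/
def S2 (x : ℝ) : ℝ := x / 2 + 1 / 2

/-- `P` satisfies the self-similarity relation `P = (1/4)·P∘S₁⁻¹ + (3/4)·P∘S₂⁻¹`. -/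
def SelfSimilar (P : Measure ℝ) : Prop :=
  P = (1/4 : ℝ≥0∞) • P.map S1 + (3/4 : ℝ≥0∞) • P.map S2

/-- For a word `σ` over `{1,2}` (encoded as `Fin 2`, `0 ↦ S₁`, `1 ↦ S₂`),
the composition `S_σ = S_{σ₁} ∘ ⋯ ∘ S_{σ_k}`. -/
def Sw : List (Fin 2) → ℝ → ℝ
  | [] => id
  | i :: σ => (if i = 0 then S1 else S2) ∘ Sw σ

/-- `p_σ`, the product of the probabilities `p₁ = 1/4`, `p₂ = 3/4` along `σ`. -/
def pw : List (Fin 2) → ℝ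
  | [] => 1
  | i :: σ => (if i = 0 then (1:ℝ)/4 else 3/4) * pw σ

/-- `s_σ`, the product of the contraction ratios `s₁ = 1/4`, `s₂ = 1/2` along `σ`. -/
def sw : List (Fin 2) → ℝ
  | [] => 1
  | i :: σ => (if i = 0 then (1:ℝ)/4 else 1/2) * sw σ

/-- `c(σ)`, the number of occurrences of the symbol `1` (encoded `0`) in `σ`. -/
def cnt (σ : List (Fin 2)) : ℕ := σ.count 0

/-- The cylinder interval `J_σ = S_σ([0,1])`. -/
def J (σ : List (Fin 2)) : Set ℝ := Sw σ '' Set.Icc 0 1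

/-- The distortion error `V(P;α) = ∫ min_{a ∈ α} (x-a)² dP`. -/
def distortion (P : Measure ℝ) (α : Finset ℝ) : ℝ :=
  ∫ x, sInf ((fun a => (x - a) ^ 2) '' (α : Set ℝ)) ∂P

/-- The `n`-th quantization error `V_n`. -/
def qError (P : Measure ℝ) (n : ℕ) : ℝ :=
  sInf {e | ∃ α : Finset ℝ, α.Nonempty ∧ α.card ≤ n ∧ e = distortion P α}

/-- `α` is an optimal set of `n`-means for `P`. -/
def IsOptimal (P : Measure ℝ) (n : ℕ) (α : Finset ℝ) : Prop :=
  α.Nonempty ∧ α.card ≤ n ∧ distortion P α = qError P n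

/-- `q_σ := P(J_σ) · λ(J_σ)²`. -/
def qnt (P : Measure ℝ) (σ : List (Fin 2)) : ℝ :=
  (P (J σ)).toReal * ((volume (J σ)).toReal) ^ 2

lemma measurable_S1 : Measurable S1 := by
  unfold S1; fun_prop

lemma measurable_S2 : Measurable S2 := by
  unfold S2; fun_prop

lemma S1_preimage (a b : ℝ) : S1 ⁻¹' Icc a b = Icc (4*a) (4*b) := by
  ext x
  simp only [S1, mem_preimage, mem_Icc]
  constructor <;> intro h <;> constructor <;> linarith [h.1, h.2]

lemma S2_preimage (a b : ℝ) : S2 ⁻¹' Icc a b = Icc (2*a - 1) (2*b - 1) := by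
  ext x
  simp only [S2, mem_preimage, mem_Icc]
  constructor <;> intro h <;> constructor <;> linarith [h.1, h.2]

lemma step (P : Measure ℝ) [IsProbabilityMeasure P] (hP : SelfSimilar P)
    (t : ℝ) (ht : 0 ≤ t) :
    P (Icc (-(2*t)) (1+2*t)) ≤ P (Icc (-t) (1+t)) := by
  have h := congrArg (fun μ : Measure ℝ => μ (Icc (-t) (1+t))) hP
  simp only [Measure.coe_add, Pi.add_apply, Measure.coe_smul, Pi.smul_apply,
    Measure.map_apply measurable_S1 measurableSet_Icc,
    Measure.map_apply measurable_S2 measurableSet_Icc, S1_preimage, S2_preimage,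
    smul_eq_mul] at h
  rw [h]
  have h1 : Icc (-(2*t)) (1+2*t) ⊆ Icc (4*(-t)) (4*(1+t)) := by
    apply Icc_subset_Icc <;> nlinarith
  have h2 : Icc (-(2*t)) (1+2*t) ⊆ Icc (2*(-t) - 1) (2*(1+t) - 1) := by
    apply Icc_subset_Icc <;> nlinarith
  have hone : (1/4 + 3/4 : ℝ≥0∞) = 1 := by
    rw [ENNReal.div_add_div_same, show (1:ℝ≥0∞)+3 = 4 by norm_num,
      ENNReal.div_self] <;> norm_num
  calc P (Icc (-(2*t)) (1+2*t))
      = (1/4 + 3/4 : ℝ≥0∞) * P (Icc (-(2*t)) (1+2*t)) := by rw [hone, one_mul]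
    _ = 1/4 * P (Icc (-(2*t)) (1+2*t)) + 3/4 * P (Icc (-(2*t)) (1+2*t)) := by
        rw [add_mul]
    _ ≤ 1/4 * P (Icc (4*(-t)) (4*(1+t))) + 3/4 * P (Icc (2*(-t)-1) (2*(1+t)-1)) := by
        gcongr <;> exact measure_mono (by assumption)

lemma iter (P : Measure ℝ) [IsProbabilityMeasure P] (hP : SelfSimilar P)
    (t : ℝ) (ht : 0 ≤ t) (n : ℕ) :
    P (Icc (-(2^n*t)) (1+2^n*t)) ≤ P (Icc (-t) (1+t)) := by
  induction n with
  | zero => simp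
  | succ n ih =>
    refine le_trans ?_ ih
    have : (2:ℝ)^(n+1)*t = 2*(2^n*t) := by ring
    rw [this]
    exact step P hP (2^n*t) (by positivity)

lemma interval_full (P : Measure ℝ) [IsProbabilityMeasure P] (hP : SelfSimilar P)
    (t : ℝ) (ht : 0 < t) : P (Icc (-t) (1+t)) = 1 := by
  set A : ℕ → Set ℝ := fun n => Icc (-(2^n*t)) (1+2^n*t) with hA
  have hmono : Monotone A := by
    intro m n hmn
    apply Icc_subset_Icc
    · have : (2:ℝ)^m ≤ 2^n := pow_le_pow_right₀ (by norm_num) hmn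
      nlinarith
    · have : (2:ℝ)^m ≤ 2^n := pow_le_pow_right₀ (by norm_num) hmn
      nlinarith
  have hunion : ⋃ n, A n = univ := by
    rw [eq_univ_iff_forall]
    intro x
    obtain ⟨n, hn⟩ := exists_nat_gt (|x| / t)
    have h2n : (n:ℝ) ≤ 2^n := by
      exact_mod_cast (Nat.lt_two_pow_self (n := n)).le
    have hx : |x| < 2^n * t := by
      have := (div_lt_iff₀ ht).mp hn
      nlinarith
    refine mem_iUnion.mpr ⟨n, ?_⟩
    constructor
    · have := abs_le.mp hx.le |>.1; linarith [neg_abs_le x]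
    · have := le_abs_self x; linarith
  have htend : Filter.Tendsto (fun n => P (A n)) Filter.atTop (nhds (P (⋃ n, A n))) :=
    tendsto_measure_iUnion_atTop hmono
  rw [hunion, measure_univ] at htend
  refine le_antisymm prob_le_one ?_
  exact le_of_tendsto' htend (fun n => iter P hP t ht.le n)

lemma ae_mem_Icc (P : Measure ℝ) [IsProbabilityMeasure P] (hP : SelfSimilar P) :
    ∀ᵐ x ∂P, x ∈ Icc (0:ℝ) 1 := by
  have hcompl : ∀ n : ℕ, P ((Icc (-(1/(n+1:ℝ))) (1+1/(n+1:ℝ)))ᶜ) = 0 := by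
    intro n
    have hpos : (0:ℝ) < 1/(n+1) := by positivity
    rw [measure_compl measurableSet_Icc (measure_ne_top P _),
      interval_full P hP _ hpos, measure_univ, tsub_self]
  have hsub : (Icc (0:ℝ) 1)ᶜ ⊆ ⋃ n : ℕ, (Icc (-(1/(n+1:ℝ))) (1+1/(n+1:ℝ)))ᶜ := by
    intro x hx
    simp only [mem_compl_iff, mem_Icc, not_and_or, not_le] at hx
    rcases hx with hx | hx
    · obtain ⟨n, hn⟩ := exists_nat_one_div_lt (show (0:ℝ) < -x by linarith)
      refine mem_iUnion.mpr ⟨n, ?_⟩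
      simp only [mem_compl_iff, mem_Icc, not_and_or, not_le]
      left; linarith
    · obtain ⟨n, hn⟩ := exists_nat_one_div_lt (show (0:ℝ) < x - 1 by linarith)
      refine mem_iUnion.mpr ⟨n, ?_⟩
      simp only [mem_compl_iff, mem_Icc, not_and_or, not_le]
      right; linarith
  have : P ((Icc (0:ℝ) 1)ᶜ) = 0 :=
    measure_mono_null hsub (measure_iUnion_null hcompl)
  rw [ae_iff]
  exact this

theorem stmt_3 (P : Measure ℝ) [IsProbabilityMeasure P] (hP : SelfSimilar P) :
    ∫ x, x ^ 2 ∂P = 28 / 51 := by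
  have hae := ae_mem_Icc P hP
  -- integrability
  have hintsq : Integrable (fun x : ℝ => x ^ 2) P := by
    refine Integrable.mono' (integrable_const 1) (by fun_prop) ?_
    filter_upwards [hae] with x hx
    rw [Real.norm_eq_abs, abs_of_nonneg (by positivity)]
    nlinarith [hx.1, hx.2]
  have hintx : Integrable (fun x : ℝ => x) P := by
    refine Integrable.mono' (integrable_const 1) measurable_id.aestronglyMeasurable ?_
    filter_upwards [hae] with x hx
    rw [Real.norm_eq_abs, abs_of_nonneg hx.1]
    exact hx.2
  -- pull back through the maps
  have hmap1 : ∀ f : ℝ → ℝ, Measurable f →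
      ∫ x, f x ∂(P.map S1) = ∫ x, f (S1 x) ∂P := fun f hf =>
    integral_map measurable_S1.aemeasurable hf.aestronglyMeasurable
  have hmap2 : ∀ f : ℝ → ℝ, Measurable f →
      ∫ x, f x ∂(P.map S2) = ∫ x, f (S2 x) ∂P := fun f hf =>
    integral_map measurable_S2.aemeasurable hf.aestronglyMeasurable
  -- integrability for the mapped measures
  have hint1 : ∀ f : ℝ → ℝ, Measurable f → Integrable (f ∘ S1) P →
      Integrable f (P.map S1) := fun f hf h =>
    (integrable_map_measure hf.aestronglyMeasurable measurable_S1.aemeasurable).mpr h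
  have hint2 : ∀ f : ℝ → ℝ, Measurable f → Integrable (f ∘ S2) P →
      Integrable f (P.map S2) := fun f hf h =>
    (integrable_map_measure hf.aestronglyMeasurable measurable_S2.aemeasurable).mpr h
  -- the master decomposition
  have master : ∀ f : ℝ → ℝ, Measurable f → Integrable (f ∘ S1) P →
      Integrable (f ∘ S2) P →
      ∫ x, f x ∂P = (1/4) * ∫ x, f (S1 x) ∂P + (3/4) * ∫ x, f (S2 x) ∂P := by
    intro f hf h1 h2
    have e1 : Integrable f ((1/4 : ℝ≥0∞) • P.map S1) :=
      (hint1 f hf h1).smul_measure (ENNReal.div_lt_top (by norm_num) (by norm_num)).ne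
    have e2 : Integrable f ((3/4 : ℝ≥0∞) • P.map S2) :=
      (hint2 f hf h2).smul_measure (ENNReal.div_lt_top (by norm_num) (by norm_num)).ne
    calc ∫ x, f x ∂P
        = ∫ x, f x ∂((1/4 : ℝ≥0∞) • P.map S1 + (3/4 : ℝ≥0∞) • P.map S2) := by
          conv_lhs => rw [hP]
      _ = ∫ x, f x ∂((1/4 : ℝ≥0∞) • P.map S1) + ∫ x, f x ∂((3/4 : ℝ≥0∞) • P.map S2) :=
          integral_add_measure e1 e2
      _ = (1/4 : ℝ≥0∞).toReal • ∫ x, f x ∂(P.map S1)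
          + (3/4 : ℝ≥0∞).toReal • ∫ x, f x ∂(P.map S2) := by
          rw [integral_smul_measure, integral_smul_measure]
      _ = (1/4) * ∫ x, f (S1 x) ∂P + (3/4) * ∫ x, f (S2 x) ∂P := by
          rw [hmap1 f hf, hmap2 f hf]
          norm_num [ENNReal.toReal_div]
  set m := ∫ x, x ∂P with hm
  set M := ∫ x, x ^ 2 ∂P with hM
  -- first moment equation
  have hintS1x : Integrable ((fun x : ℝ => x) ∘ S1) P := by
    have : ((fun x : ℝ => x) ∘ S1) = fun x : ℝ => (1/4) * x := by
      funext x; simp [S1]; ring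
    rw [this]; exact hintx.const_mul _
  have hintS2x : Integrable ((fun x : ℝ => x) ∘ S2) P := by
    have : ((fun x : ℝ => x) ∘ S2) = fun x : ℝ => (1/2) * x + 1/2 := by
      funext x; simp [S2]; ring
    rw [this]; exact (hintx.const_mul _).add (integrable_const _)
  have eqm : m = (1/4) * ((1/4) * m) + (3/4) * ((1/2) * m + 1/2) := by
    have h := master (fun x => x) measurable_id hintS1x hintS2x
    have c1 : ∫ x, S1 x ∂P = (1/4) * m := by
      rw [show (fun x => S1 x) = fun x : ℝ => (1/4) * x by funext x; simp [S1]; ring,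
        integral_const_mul]
    have c2 : ∫ x, S2 x ∂P = (1/2) * m + 1/2 := by
      rw [show (fun x => S2 x) = fun x : ℝ => (1/2) * x + 1/2 by
        funext x; simp [S2]; ring]
      rw [integral_add (hintx.const_mul _) (integrable_const _), integral_const_mul,
        integral_const]
      simp [hm]
    rw [c1, c2] at h
    exact h
  -- second moment equation
  have hintS1sq : Integrable ((fun x : ℝ => x ^ 2) ∘ S1) P := by
    have : ((fun x : ℝ => x ^ 2) ∘ S1) = fun x : ℝ => (1/16) * x ^ 2 := by
      funext x; simp [S1]; ring
    rw [this]; exact hintsq.const_mul _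
  have hintS2sq : Integrable ((fun x : ℝ => x ^ 2) ∘ S2) P := by
    have : ((fun x : ℝ => x ^ 2) ∘ S2) = fun x : ℝ => (1/4) * x ^ 2 + ((1/2) * x + 1/4) := by
      funext x; simp [S2]; ring
    rw [this]
    exact (hintsq.const_mul _).add ((hintx.const_mul _).add (integrable_const _))
  have eqM : M = (1/4) * ((1/16) * M) + (3/4) * ((1/4) * M + ((1/2) * m + 1/4)) := by
    have h := master (fun x => x ^ 2) (by fun_prop) hintS1sq hintS2sq
    have c1 : ∫ x, (S1 x) ^ 2 ∂P = (1/16) * M := by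
      rw [show (fun x => (S1 x) ^ 2) = fun x : ℝ => (1/16) * x ^ 2 by
        funext x; simp [S1]; ring, integral_const_mul]
    have c2 : ∫ x, (S2 x) ^ 2 ∂P = (1/4) * M + ((1/2) * m + 1/4) := by
      rw [show (fun x => (S2 x) ^ 2) = fun x : ℝ => (1/4) * x ^ 2 + ((1/2) * x + 1/4) by
        funext x; simp [S2]; ring]
      have i1 : ∫ x : ℝ, ((1:ℝ)/2) * x + 1/4 ∂P = (1/2) * m + 1/4 := by
        rw [integral_add (hintx.const_mul _) (integrable_const _), integral_const_mul,
          integral_const]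
        simp [hm]
      have i2 : Integrable (fun x : ℝ => (1:ℝ)/2 * x + 1/4) P :=
        (hintx.const_mul _).add (integrable_const _)
      rw [integral_add (hintsq.const_mul _) i2, integral_const_mul, i1]
    rw [c1, c2] at h
    exact h
  linarith
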